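/- arXiv:2310.17637 — 4 statements merged into one kernel-verified Lean document; each statement's English description precedes it below -/
import Mathlib

section
/- Let y = (m, E, C) be a state with C_i > 0 for all i and Z(y) > 0, and let G be a mass-conserving normal viscous flux (M(G) = 0). If β > β*(y, G), then both shifted states y + β⁻¹·G and y − β⁻¹·G lie in the admissible set 𝒢; moreover all of their concentration components are strictly positive and their density equals ρ(y). -/
open scoped BigOperators

namespace PaperStmt

noncomputable section

abbrev State (d ns : ℕ) : Type := (Fin d → ℝ) × ℝ × (Fin ns → ℝ)

variable {d ns : ℕ}

/-- Euclidean dot product of momentum-like vectors. -/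
def dotP (a b : Fin d → ℝ) : ℝ := ∑ k, a k * b k

/-- Squared Euclidean norm. -/
def normSq (a : Fin d → ℝ) : ℝ := ∑ k, a k ^ 2

/-- Density `ρ(y) = Σ_i W_i C_i`. -/
def rho (W : Fin ns → ℝ) (y : State d ns) : ℝ := ∑ i, W i * y.2.2 i

/-- Scaled shifted internal energy `Z(y) = ρ(y)·E − |m|²/2 − ρ(y)²·u0`. -/
def Z (W : Fin ns → ℝ) (u0 : ℝ) (y : State d ns) : ℝ :=
  rho W y * y.2.1 - normSq y.1 / 2 - rho W y ^ 2 * u0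

/-- The admissible set `𝒢`. -/
def Gset (W : Fin ns → ℝ) (u0 : ℝ) : Set (State d ns) :=
  {y | (∀ i, 0 ≤ y.2.2 i) ∧ 0 < rho W y ∧ 0 < Z W u0 y}

/-- Mass production of a normal viscous flux: `M(G) = Σ_i W_i G_{C,i}`. -/
def Mflux (W : Fin ns → ℝ) (G : State d ns) : ℝ := ∑ i, W i * G.2.2 i

/-- `b(y,G) = ρ(y)·G_E − m·G_m`. -/
def bCoef (W : Fin ns → ℝ) (y G : State d ns) : ℝ :=
  rho W y * G.2.1 - dotP y.1 G.1

/-- `β_T(y,G) = (|b| + √(b² + 2 Z(y) |G_m|²)) / (2 Z(y))`. -/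
def betaT (W : Fin ns → ℝ) (u0 : ℝ) (y G : State d ns) : ℝ :=
  (|bCoef W y G| + Real.sqrt (bCoef W y G ^ 2 + 2 * Z W u0 y * normSq G.1)) /
    (2 * Z W u0 y)

/-- `β*(y,G) = max{ max_i |G_{C,i}|/C_i , β_T(y,G) }`. -/
def betaStar (W : Fin ns → ℝ) (u0 : ℝ) (y G : State d ns) : ℝ :=
  max (⨆ i, |G.2.2 i| / y.2.2 i) (betaT W u0 y G)

/-
The flux shifts the state along a line, `y + c • G`. Mass conservation keeps `ρ` fixed on this
line, so each concentration and `Z` move as an affine, resp. concave quadratic, function of `c`: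
`Z(y + c • G) = Z(y) + c b - c² |G_m|² / 2`. For `|c| ≤ t` this is at least
`Z(y) - |b| t - |G_m|² t² / 2`, whose positive root is `1 / β_T`; likewise `C_i / |G_{C,i}|` is
the root for the `i`-th concentration. So `β > β*` puts `|c| = β⁻¹` below every root.
-/

lemma rho_add_smul (W : Fin ns → ℝ) (y G : State d ns) (c : ℝ) :
    rho W (y + c • G) = rho W y + c * Mflux W G := by
  simp only [rho, Mflux, Prod.snd_add, Prod.smul_snd, Pi.add_apply, Pi.smul_apply, smul_eq_mul,
    Finset.mul_sum, ← Finset.sum_add_distrib]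
  exact Finset.sum_congr rfl fun i _ => by ring

lemma normSq_add_smul (a b : Fin d → ℝ) (c : ℝ) :
    normSq (a + c • b) = normSq a + 2 * c * dotP a b + c ^ 2 * normSq b := by
  simp only [normSq, dotP, Pi.add_apply, Pi.smul_apply, smul_eq_mul, Finset.mul_sum,
    ← Finset.sum_add_distrib]
  exact Finset.sum_congr rfl fun k _ => by ring

lemma normSq_nonneg (a : Fin d → ℝ) : 0 ≤ normSq a :=
  Finset.sum_nonneg fun k _ => sq_nonneg (a k)

section

variable {W : Fin ns → ℝ} {u0 : ℝ} {y G : State d ns}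

lemma rho_add_smul_of_Mflux_eq_zero (hM : Mflux W G = 0) (c : ℝ) :
    rho W (y + c • G) = rho W y := by
  rw [rho_add_smul, hM, mul_zero, add_zero]

lemma Z_add_smul (hM : Mflux W G = 0) (c : ℝ) :
    Z W u0 (y + c • G) = Z W u0 y + c * bCoef W y G - c ^ 2 * normSq G.1 / 2 := by
  have hsnd : (y + c • G).2.1 = y.2.1 + c * G.2.1 := rfl
  simp only [Z, bCoef, rho_add_smul_of_Mflux_eq_zero hM, Prod.fst_add, Prod.smul_fst,
    normSq_add_smul, hsnd]
  ring

lemma rho_pos (hW : ∀ i, 0 < W i) (hC : ∀ i, 0 < y.2.2 i) (hZ : 0 < Z W u0 y) :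
    0 < rho W y := by
  have hnonneg : 0 ≤ rho W y := Finset.sum_nonneg fun i _ => (mul_pos (hW i) (hC i)).le
  refine hnonneg.lt_of_ne fun h => ?_
  have : Z W u0 y = -(normSq y.1 / 2) := by rw [Z, ← h]; ring
  linarith [normSq_nonneg y.1]

lemma betaT_nonneg (hZ : 0 < Z W u0 y) : 0 ≤ betaT W u0 y G := by
  unfold betaT
  positivity

lemma abs_div_lt_of_betaStar_lt {β : ℝ} (hβ : betaStar W u0 y G < β) (i : Fin ns) :
    |G.2.2 i| / y.2.2 i < β :=
  ((le_ciSup (Set.finite_range _).bddAbove i).trans (le_max_left _ _)).trans_lt hβ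

lemma betaT_lt_of_betaStar_lt {β : ℝ} (hβ : betaStar W u0 y G < β) : betaT W u0 y G < β :=
  (le_max_right _ _).trans_lt hβ

end

/-- Clearing denominators in `(|b| + s) / (2z) < β` with `s² = b² + 2zn` gives this, because
`(2zβ - |b| - s)(2zβ - |b| + s) = 2z (2zβ² - 2|b|β - n)`. -/
lemma quadratic_pos_of_root_lt {z n b β : ℝ} (hz : 0 < z) (hn : 0 ≤ n)
    (h : (|b| + √(b ^ 2 + 2 * z * n)) / (2 * z) < β) :
    0 < z * β ^ 2 - |b| * β - n / 2 := by
  set s := √(b ^ 2 + 2 * z * n)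
  have hs_sq : s ^ 2 = b ^ 2 + 2 * z * n := Real.sq_sqrt (by positivity)
  have hs_ge : |b| ≤ s := Real.abs_le_sqrt (by nlinarith)
  have hlt : |b| + s < 2 * z * β := by rwa [div_lt_iff₀ (by positivity), mul_comm] at h
  have hprod : 0 < (2 * z * β - |b| - s) * (2 * z * β - |b| + s) :=
    mul_pos (by linarith) (by linarith [Real.sqrt_nonneg (b ^ 2 + 2 * z * n)])
  nlinarith [sq_abs b]

section

variable {W : Fin ns → ℝ} {u0 : ℝ} {y G : State d ns} {β c : ℝ}

lemma Z_add_smul_pos (hZ : 0 < Z W u0 y) (hM : Mflux W G = 0)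
    (hβ : betaT W u0 y G < β) (hc : |c| ≤ β⁻¹) : 0 < Z W u0 (y + c • G) := by
  have hβpos : 0 < β := (betaT_nonneg hZ).trans_lt hβ
  set b := bCoef W y G
  set n := normSq G.1
  have hn : 0 ≤ n := normSq_nonneg G.1
  have hq := quadratic_pos_of_root_lt hZ hn hβ
  have hcb : -(|b| * β⁻¹) ≤ c * b := by
    have := neg_abs_le (c * b)
    rw [abs_mul] at this
    nlinarith [abs_nonneg b]
  have hc_sq : c ^ 2 ≤ β⁻¹ ^ 2 := by
    rw [← sq_abs]
    exact pow_le_pow_left₀ (abs_nonneg c) hc 2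
  have hlower : Z W u0 y - |b| * β⁻¹ - β⁻¹ ^ 2 * n / 2
      = β⁻¹ ^ 2 * (Z W u0 y * β ^ 2 - |b| * β - n / 2) := by
    field_simp
  rw [Z_add_smul hM]
  nlinarith [mul_le_mul_of_nonneg_right hc_sq hn, mul_pos (pow_pos (inv_pos.mpr hβpos) 2) hq]

lemma concentration_add_smul_pos (hC : ∀ i, 0 < y.2.2 i)
    (hβ : ∀ i, |G.2.2 i| / y.2.2 i < β) (hc : |c| ≤ β⁻¹) (i : Fin ns) :
    0 < (y + c • G).2.2 i := by
  have hβpos : 0 < β := (div_nonneg (abs_nonneg _) (hC i).le).trans_lt (hβ i)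
  have hGi : |G.2.2 i| < β * y.2.2 i := (div_lt_iff₀ (hC i)).mp (hβ i)
  have hshift : |c * G.2.2 i| < y.2.2 i :=
    calc |c * G.2.2 i| = |c| * |G.2.2 i| := abs_mul _ _
      _ ≤ β⁻¹ * |G.2.2 i| := mul_le_mul_of_nonneg_right hc (abs_nonneg _)
      _ < y.2.2 i := (inv_mul_lt_iff₀ hβpos).mpr hGi
  show 0 < y.2.2 i + c * G.2.2 i
  linarith [neg_abs_le (c * G.2.2 i)]

lemma add_smul_mem_Gset (hW : ∀ i, 0 < W i) (hC : ∀ i, 0 < y.2.2 i) (hZ : 0 < Z W u0 y)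
    (hM : Mflux W G = 0) (hβ : betaStar W u0 y G < β) (hc : |c| ≤ β⁻¹) :
    y + c • G ∈ Gset W u0 ∧ (∀ i, 0 < (y + c • G).2.2 i) ∧ rho W (y + c • G) = rho W y := by
  have hconc := concentration_add_smul_pos hC (abs_div_lt_of_betaStar_lt hβ) hc
  have hrho := rho_add_smul_of_Mflux_eq_zero (y := y) hM c
  refine ⟨⟨fun i => (hconc i).le, hrho ▸ rho_pos hW hC hZ, ?_⟩, hconc, hrho⟩
  exact Z_add_smul_pos hZ hM (betaT_lt_of_betaStar_lt hβ) hc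

end

/-- Lemma on the positivity-preserving dissipation coefficient
(Lemma `beta-constraints`): if all concentrations of `y` are positive, `Z(y) > 0`,
`G` is a mass-conserving normal viscous flux, and `β > β*(y,G)`, then
`y ± β⁻¹ • G ∈ 𝒢`, with strictly positive concentrations and unchanged density. -/
theorem beta_constraints (W : Fin ns → ℝ) (u0 : ℝ) (hW : ∀ i, 0 < W i)
    (y G : State d ns) (hC : ∀ i, 0 < y.2.2 i) (hZ : 0 < Z W u0 y)
    (hM : Mflux W G = 0) (β : ℝ) (hβ : betaStar W u0 y G < β) :
    ((y + β⁻¹ • G) ∈ Gset W u0 ∧ (y - β⁻¹ • G) ∈ Gset W u0) ∧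
    (∀ i, 0 < (y + β⁻¹ • G).2.2 i ∧ 0 < (y - β⁻¹ • G).2.2 i) ∧
    (rho W (y + β⁻¹ • G) = rho W y ∧ rho W (y - β⁻¹ • G) = rho W y) := by
  have hβpos : 0 < β := (betaT_nonneg hZ).trans_lt (betaT_lt_of_betaStar_lt hβ)
  have habs : |β⁻¹| = β⁻¹ := abs_of_pos (inv_pos.mpr hβpos)
  obtain ⟨hmem_add, hconc_add, hrho_add⟩ := add_smul_mem_Gset hW hC hZ hM hβ habs.le
  obtain ⟨hmem_sub, hconc_sub, hrho_sub⟩ :=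
    add_smul_mem_Gset (c := -β⁻¹) hW hC hZ hM hβ (by rw [abs_neg, habs])
  rw [neg_smul, ← sub_eq_add_neg] at hmem_sub hconc_sub hrho_sub
  exact ⟨⟨hmem_add, hmem_sub⟩, fun i => ⟨hconc_add i, hconc_sub i⟩, hrho_add, hrho_sub⟩

end
end PaperStmt
end

section
/- The admissible set 𝒢 = { y = (m, E, C) : C_i ≥ 0 for all i, ρ(y) > 0, and Z(y) > 0 } is a convex subset of ℝ^d × ℝ × ℝ^{n_s}. -/
/-!
Where `ρ > 0`, `Z = ρ · ρu*` with `ρu* = E − ρ u₀ − |m|²/(2ρ)`. The map `(m, ρ) ↦ |m|²/ρ` is the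
perspective of the squared norm, and its joint convexity is Sedrakyan's inequality
`(a + b)²/(A + B) ≤ a²/A + b²/B` applied coordinatewise. Hence `ρu*` is concave on the half-space
`ρ > 0`, and `𝒢` is the intersection of the orthant `C ≥ 0` with a strict superlevel set of `ρu*`.
-/

open scoped BigOperators

namespace PaperStmt

noncomputable section

variable {d ns : ℕ}

theorem add_sq_div_add_le {a b A B : ℝ} (hA : 0 < A) (hB : 0 < B) :
    (a + b) ^ 2 / (A + B) ≤ a ^ 2 / A + b ^ 2 / B := by
  rw [div_add_div _ _ hA.ne' hB.ne', div_le_div_iff₀ (by positivity) (by positivity)]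
  nlinarith [sq_nonneg (a * B - b * A), mul_pos hA hB]

theorem convexOn_normSq_div {E : Type*} [AddCommGroup E] [Module ℝ E] {π : E → Fin d → ℝ}
    {ℓ : E → ℝ} (hπ : IsLinearMap ℝ π) (hℓ : IsLinearMap ℝ ℓ)
    {S : Set E} (hS : Convex ℝ S) (hℓS : ∀ x ∈ S, 0 < ℓ x) :
    ConvexOn ℝ S (fun x => normSq (π x) / ℓ x) := by
  refine convexOn_iff_forall_pos.2 ⟨hS, ?_⟩
  intro x hx y hy s t hs ht _
  have hsx : 0 < s * ℓ x := mul_pos hs (hℓS x hx)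
  have hty : 0 < t * ℓ y := mul_pos ht (hℓS y hy)
  calc normSq (π (s • x + t • y)) / ℓ (s • x + t • y)
      = ∑ k, (s * π x k + t * π y k) ^ 2 / (s * ℓ x + t * ℓ y) := by
        simp only [normSq, hπ.map_add, hπ.map_smul, hℓ.map_add, hℓ.map_smul, smul_eq_mul,
          Pi.add_apply, Pi.smul_apply, Finset.sum_div]
    _ ≤ ∑ k, ((s * π x k) ^ 2 / (s * ℓ x) + (t * π y k) ^ 2 / (t * ℓ y)) :=
        Finset.sum_le_sum fun k _ => add_sq_div_add_le hsx hty
    _ = s • (normSq (π x) / ℓ x) + t • (normSq (π y) / ℓ y) := by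
        simp only [normSq, smul_eq_mul, Finset.sum_add_distrib, Finset.sum_div, Finset.mul_sum]
        congr 1 <;> refine Finset.sum_congr rfl fun k _ => ?_ <;> field_simp

theorem isLinearMap_rho (W : Fin ns → ℝ) : IsLinearMap ℝ (rho (d := d) W) where
  map_add y z := by simp only [rho, Prod.snd_add, Pi.add_apply, mul_add, Finset.sum_add_distrib]
  map_smul c y := by
    simp only [rho, Prod.smul_snd, Pi.smul_apply, smul_eq_mul, Finset.mul_sum]
    exact Finset.sum_congr rfl fun i _ => by ring

def shiftedInternalEnergy (W : Fin ns → ℝ) (u0 : ℝ) (y : State d ns) : ℝ :=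
  y.2.1 - rho W y * u0 - normSq y.1 / (2 * rho W y)

theorem concaveOn_shiftedInternalEnergy (W : Fin ns → ℝ) (u0 : ℝ) :
    ConcaveOn ℝ {y : State d ns | 0 < rho W y} (shiftedInternalEnergy W u0) := by
  have hρ := isLinearMap_rho (d := d) W
  have hS := convex_halfSpace_gt hρ 0
  have hlin : IsLinearMap ℝ fun y : State d ns => y.2.1 - rho W y * u0 := by
    constructor <;> intros <;> simp only [hρ.map_add, hρ.map_smul, Prod.snd_add, Prod.fst_add,
      Prod.smul_snd, Prod.smul_fst, smul_eq_mul] <;> ring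
  have h2ρ : IsLinearMap ℝ fun y : State d ns => 2 * rho W y := by
    constructor <;> intros <;> simp only [hρ.map_add, hρ.map_smul, smul_eq_mul] <;> ring
  exact ((hlin.mk' _).concaveOn hS).sub <| convexOn_normSq_div (π := Prod.fst)
    ⟨fun _ _ => rfl, fun _ _ => rfl⟩ h2ρ hS fun y hy => mul_pos two_pos hy

theorem Z_eq_rho_mul_shiftedInternalEnergy (W : Fin ns → ℝ) (u0 : ℝ) {y : State d ns}
    (hy : rho W y ≠ 0) : Z W u0 y = rho W y * shiftedInternalEnergy W u0 y := by
  unfold Z shiftedInternalEnergy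
  field_simp
  ring

theorem Gset_eq (W : Fin ns → ℝ) (u0 : ℝ) :
    Gset (d := d) W u0 = {y | ∀ i, 0 ≤ y.2.2 i} ∩
      {y ∈ {y | 0 < rho W y} | 0 < shiftedInternalEnergy W u0 y} := by
  ext y
  simp only [Gset, Set.mem_ofPred_eq, Set.mem_inter_iff, and_congr_right_iff]
  intro _ hρ
  rw [Z_eq_rho_mul_shiftedInternalEnergy W u0 hρ.ne', mul_pos_iff_of_pos_left hρ]

theorem Gset_convex_general (W : Fin ns → ℝ) (u0 : ℝ) :
    Convex ℝ (Gset (d := d) W u0) := by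
  rw [Gset_eq, Set.ofPred_forall]
  exact (convex_iInter fun i => convex_halfSpace_ge (f := fun y : State d ns => y.2.2 i)
    ⟨fun _ _ => rfl, fun _ _ => rfl⟩ 0).inter
    ((concaveOn_shiftedInternalEnergy W u0).convex_gt 0)

/-- the admissible set `𝒢` is a convex subset of the state space. -/
theorem Gset_convex (W : Fin ns → ℝ) (u0 : ℝ) (hW : ∀ i, 0 < W i) :
    Convex ℝ (Gset (d := d) W u0) :=
  Gset_convex_general W u0

end
end PaperStmt
end

section
/- Let y ∈ 𝒢 and neighbor states y_1, …, y_{n_f} ∈ 𝒢, and let Δt* > 0, |κ| > 0, face areas |∂κ^{(f)}| ≥ 0, and dissipation coefficients β_f > 0 satisfy Σ_{f=1}^{n_f} (Δt*·|∂κ^{(f)}| / (2|κ|))·β_f ≤ 1. Then the first-order (p = 0) Lax-Friedrichs-type viscous update y' = (1 − Σ_f (Δt*|∂κ^{(f)}|/(2|κ|))·β_f)·y + Σ_f (Δt*|∂κ^{(f)}|/(2|κ|))·β_f·y_f belongs to 𝒢. -/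
open scoped BigOperators

namespace PaperStmt

noncomputable section

variable {d ns : ℕ}

/-! The update is a convex combination of admissible states, so it suffices that `𝒢` is convex.
On `{ρ > 0}` the quotient `Z / ρ = E - |m|² / (2ρ) - ρ u0` is concave: its only nonlinear term
`|m|² / ρ` is the perspective of `|m|²`, whose convexity is, coordinatewise, the weighted
Cauchy–Schwarz inequality `(a u + b v)² ≤ (a ρ + b σ) (a u² / ρ + b v² / σ)`. Hence
`𝒢 = {C ≥ 0} ∩ {ρ > 0, Z / ρ > 0}` is an intersection of convex sets. -/

lemma sq_add_le_mul_add_sq_div {a b ρ σ : ℝ} (ha : 0 ≤ a) (hb : 0 ≤ b) (hρ : 0 < ρ) (hσ : 0 < σ)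
    (u v : ℝ) : (a * u + b * v) ^ 2 ≤ (a * ρ + b * σ) * (a * (u ^ 2 / ρ) + b * (v ^ 2 / σ)) := by
  have gap : (a * ρ + b * σ) * (a * (u ^ 2 / ρ) + b * (v ^ 2 / σ)) - (a * u + b * v) ^ 2
      = a * b * (u * σ - v * ρ) ^ 2 / (ρ * σ) := by
    field_simp
    ring
  have : 0 ≤ a * b * (u * σ - v * ρ) ^ 2 / (ρ * σ) := by positivity
  linarith

lemma normSq_smul_add_smul_le {a b ρ σ : ℝ} (ha : 0 ≤ a) (hb : 0 ≤ b) (hρ : 0 < ρ) (hσ : 0 < σ)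
    (m n : Fin d → ℝ) :
    normSq (a • m + b • n) ≤ (a * ρ + b * σ) * (a * (normSq m / ρ) + b * (normSq n / σ)) := by
  simp only [normSq, Finset.sum_div, Finset.mul_sum, ← Finset.sum_add_distrib]
  exact Finset.sum_le_sum fun k _ => by
    simpa [mul_add] using sq_add_le_mul_add_sq_div ha hb hρ hσ (m k) (n k)

section

variable (W : Fin ns → ℝ) (u0 : ℝ)

lemma rho_smul_add_smul (a b : ℝ) (x y : State d ns) :
    rho W (a • x + b • y) = a * rho W x + b * rho W y := by
  simp only [rho, Prod.snd_add, Prod.smul_snd, Pi.add_apply, Pi.smul_apply, smul_eq_mul,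
    Finset.mul_sum, ← Finset.sum_add_distrib]
  exact Finset.sum_congr rfl fun i _ => by ring

lemma convex_rho_pos : Convex ℝ {y : State d ns | 0 < rho W y} := by
  refine convex_iff_forall_pos.2 fun x hx y hy a b ha hb _ => ?_
  simp only [Set.mem_ofPred_eq, rho_smul_add_smul] at *
  positivity

lemma rho_mul_le_Z_smul_add_smul {a b : ℝ} (ha : 0 ≤ a) (hb : 0 ≤ b) {x y : State d ns}
    (hx : 0 < rho W x) (hy : 0 < rho W y) :
    rho W (a • x + b • y) * (a * (Z W u0 x / rho W x) + b * (Z W u0 y / rho W y))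
      ≤ Z W u0 (a • x + b • y) := by
  have hm := normSq_smul_add_smul_le ha hb hx hy x.1 y.1
  simp only [Z, rho_smul_add_smul] at *
  simp only [Prod.fst_add, Prod.smul_fst, Prod.snd_add, Prod.smul_snd, smul_eq_mul] at *
  have expand : a * ((rho W x * x.2.1 - normSq x.1 / 2 - rho W x ^ 2 * u0) / rho W x)
      + b * ((rho W y * y.2.1 - normSq y.1 / 2 - rho W y ^ 2 * u0) / rho W y)
      = a * x.2.1 + b * y.2.1 - (a * (normSq x.1 / rho W x) + b * (normSq y.1 / rho W y)) / 2
        - (a * rho W x + b * rho W y) * u0 := by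
    field_simp
    ring
  rw [expand]
  nlinarith

theorem concaveOn_Z_div_rho :
    ConcaveOn ℝ {y : State d ns | 0 < rho W y} fun y => Z W u0 y / rho W y := by
  refine ⟨convex_rho_pos W, fun x hx y hy a b ha hb hab => ?_⟩
  have hS : 0 < rho W (a • x + b • y) := convex_rho_pos W hx hy ha hb hab
  rw [le_div_iff₀ hS, mul_comm]
  exact rho_mul_le_Z_smul_add_smul W u0 ha hb hx hy

theorem convex_Gset : Convex ℝ (Gset W u0 : Set (State d ns)) := by
  refine convex_iff_forall_pos.2 fun x ⟨hxC, hxρ, hxZ⟩ y ⟨hyC, hyρ, hyZ⟩ a b ha hb hab => ?_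
  obtain ⟨hρ, hZ⟩ := (concaveOn_Z_div_rho W u0).convex_gt 0
    ⟨hxρ, div_pos hxZ hxρ⟩ ⟨hyρ, div_pos hyZ hyρ⟩ ha.le hb.le hab
  refine ⟨fun i => ?_, hρ, (div_pos_iff_of_pos_right hρ).1 hZ⟩
  simp only [Prod.snd_add, Prod.smul_snd, Pi.add_apply, Pi.smul_apply, smul_eq_mul]
  exact add_nonneg (mul_nonneg ha.le (hxC i)) (mul_nonneg hb.le (hyC i))

end

theorem p0_viscous_update_in_G_general (W : Fin ns → ℝ) (u0 : ℝ)
    {nf : ℕ} (y : State d ns) (hy : y ∈ Gset W u0)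
    (yf : Fin nf → State d ns) (hyf : ∀ f, yf f ∈ Gset W u0)
    (Δt vol : ℝ) (hΔt : 0 < Δt) (hvol : 0 < vol)
    (area : Fin nf → ℝ) (harea : ∀ f, 0 ≤ area f)
    (β : Fin nf → ℝ) (hβ : ∀ f, 0 < β f)
    (hsum : ∑ f, Δt * area f / (2 * vol) * β f ≤ 1) :
    (1 - ∑ f, Δt * area f / (2 * vol) * β f) • y
      + ∑ f, (Δt * area f / (2 * vol) * β f) • yf f ∈ Gset W u0 := by
  set c : Fin nf → ℝ := fun f => Δt * area f / (2 * vol) * β f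
  have hc : ∀ f, 0 ≤ c f := fun f => by have := harea f; have := hβ f; positivity
  have hmem := (convex_Gset W u0).sum_mem (t := Finset.univ)
    (w := Fin.cons (1 - ∑ f, c f) c) (z := Fin.cons y yf)
    (by simpa [Fin.forall_fin_succ] using ⟨hsum, hc⟩) (by simp [Fin.sum_univ_succ])
    (by simpa [Fin.forall_fin_succ] using ⟨hy, hyf⟩)
  simpa [Fin.sum_univ_succ] using hmem

/-- the first-order (`p = 0`) Lax-Friedrichs-type viscous update is a
convex combination of admissible states and hence remains in `𝒢` under the stated
time-step-size constraint. -/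
theorem p0_viscous_update_in_G (W : Fin ns → ℝ) (u0 : ℝ) (hW : ∀ i, 0 < W i)
    {nf : ℕ} (y : State d ns) (hy : y ∈ Gset W u0)
    (yf : Fin nf → State d ns) (hyf : ∀ f, yf f ∈ Gset W u0)
    (Δt vol : ℝ) (hΔt : 0 < Δt) (hvol : 0 < vol)
    (area : Fin nf → ℝ) (harea : ∀ f, 0 ≤ area f)
    (β : Fin nf → ℝ) (hβ : ∀ f, 0 < β f)
    (hsum : ∑ f, Δt * area f / (2 * vol) * β f ≤ 1) :
    (1 - ∑ f, Δt * area f / (2 * vol) * β f) • y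
      + ∑ f, (Δt * area f / (2 * vol) * β f) • yf f ∈ Gset W u0 :=
  p0_viscous_update_in_G_general W u0 y hy yf hyf Δt vol hΔt hvol area harea β hβ hsum

end
end PaperStmt
end

section
/- Let y = (m, E, C) be a state with C_i > 0 for all i and Z(y) > 0, and let Δy ∈ ℝ^d × ℝ × ℝ^{n_s} be any perturbation. If α > α*(y, Δy), then the state y − α⁻¹·Δy lies in the admissible set 𝒢; moreover all of its concentration components are strictly positive. -/
open scoped BigOperators

namespace PaperStmt

noncomputable section

variable {d ns : ℕ}

/-- `b(y,Δy) = −E·M(Δy) − ρ(y)·ΔE + m·Δm + 2 ρ(y) u0 M(Δy)` for a perturbation `Δy`. -/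
def bPert (W : Fin ns → ℝ) (u0 : ℝ) (y dy : State d ns) : ℝ :=
  -(y.2.1 * Mflux W dy) - rho W y * dy.2.1 + dotP y.1 dy.1
    + 2 * rho W y * u0 * Mflux W dy

/-- `g(y,Δy) = M(Δy)·ΔE − |Δm|²/2 − u0·M(Δy)²`. -/
def gPert (W : Fin ns → ℝ) (u0 : ℝ) (dy : State d ns) : ℝ :=
  Mflux W dy * dy.2.1 - normSq dy.1 / 2 - u0 * Mflux W dy ^ 2

/-- `α_T(y,Δy) = (−b + √(b² − 4 Z(y) g)) / (2 Z(y))` when the discriminant is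
nonnegative, and `0` otherwise. -/
def alphaT (W : Fin ns → ℝ) (u0 : ℝ) (y dy : State d ns) : ℝ :=
  if 0 ≤ bPert W u0 y dy ^ 2 - 4 * Z W u0 y * gPert W u0 dy then
    (-bPert W u0 y dy
        + Real.sqrt (bPert W u0 y dy ^ 2 - 4 * Z W u0 y * gPert W u0 dy)) /
      (2 * Z W u0 y)
  else 0

/-- `α*(y,Δy) = max{ max_i ΔC_i/C_i , α_T(y,Δy), 0 }`. -/
def alphaStar (W : Fin ns → ℝ) (u0 : ℝ) (y dy : State d ns) : ℝ :=
  max (⨆ i, dy.2.2 i / y.2.2 i) (max (alphaT W u0 y dy) 0)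

/-
The concentrations are handled one species at a time: `ΔC_i / C_i < α` is exactly
`C_i - α⁻¹ ΔC_i > 0`. For the energy, `Z` is quadratic along the line `y - c • Δy`, namely
`Z(y - c Δy) = Z(y) + c b + c² g`, so with `c = α⁻¹` its sign is that of
`Z(y) α² + b α + g`. This quadratic in `α` has positive leading coefficient, so it is positive
beyond its largest root `α_T`, and everywhere if it has no real root. Finally, positive
concentrations force `ρ > 0` once `Z > 0`, since `ρ = 0` would give `Z = -|m|²/2 ≤ 0`.
-/

theorem quadratic_pos_of_discrim_neg {a b c : ℝ} (ha : 0 < a) (hd : discrim a b c < 0)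
    (x : ℝ) : 0 < a * (x * x) + b * x + c := by
  rw [discrim] at hd
  nlinarith [sq_nonneg (2 * a * x + b)]

theorem quadratic_pos_of_root_lt_s9 {a b c x : ℝ} (ha : 0 < a)
    (hx : (-b + √(discrim a b c)) / (2 * a) < x) : 0 < a * (x * x) + b * x + c := by
  have hroot : √(discrim a b c) < 2 * a * x + b := by
    rw [div_lt_iff₀ (by positivity)] at hx
    linarith
  have hsq : discrim a b c ≤ √(discrim a b c) ^ 2 := by
    rw [Real.sq_sqrt']
    exact le_max_left _ _
  have hlt : √(discrim a b c) ^ 2 < (2 * a * x + b) ^ 2 :=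
    pow_lt_pow_left₀ hroot (Real.sqrt_nonneg _) two_ne_zero
  have hid : (2 * a * x + b) ^ 2 - discrim a b c = 4 * a * (a * (x * x) + b * x + c) := by
    rw [discrim]
    ring
  have h4a : 0 < 4 * a := by positivity
  exact pos_of_mul_pos_right (hid ▸ sub_pos.mpr (hsq.trans_lt hlt)) h4a.le

lemma conc_sub_smul (y dy : State d ns) (c : ℝ) (i : Fin ns) :
    (y - c • dy).2.2 i = y.2.2 i - c * dy.2.2 i :=
  rfl

lemma rho_sub_smul (W : Fin ns → ℝ) (y dy : State d ns) (c : ℝ) :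
    rho W (y - c • dy) = rho W y - c * Mflux W dy := by
  simp only [rho, Mflux, conc_sub_smul, Finset.mul_sum, ← Finset.sum_sub_distrib]
  exact Finset.sum_congr rfl fun i _ => by ring

lemma normSq_sub_smul (y dy : State d ns) (c : ℝ) :
    normSq (y - c • dy).1 = normSq y.1 - 2 * c * dotP y.1 dy.1 + c ^ 2 * normSq dy.1 := by
  simp only [normSq, dotP, Prod.fst_sub, Prod.smul_fst, Pi.sub_apply, Pi.smul_apply,
    smul_eq_mul, Finset.mul_sum, ← Finset.sum_sub_distrib, ← Finset.sum_add_distrib]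
  exact Finset.sum_congr rfl fun k _ => by ring

lemma Z_sub_smul (W : Fin ns → ℝ) (u0 : ℝ) (y dy : State d ns) (c : ℝ) :
    Z W u0 (y - c • dy) = Z W u0 y + c * bPert W u0 y dy + c ^ 2 * gPert W u0 dy := by
  have hE : (y - c • dy).2.1 = y.2.1 - c * dy.2.1 := rfl
  rw [Z, rho_sub_smul, normSq_sub_smul, hE, Z, bPert, gPert]
  ring

lemma rho_pos_of_Z_pos {W : Fin ns → ℝ} {u0 : ℝ} {y : State d ns} (hW : ∀ i, 0 ≤ W i)
    (hC : ∀ i, 0 ≤ y.2.2 i) (hZ : 0 < Z W u0 y) : 0 < rho W y := by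
  have hnonneg : 0 ≤ rho W y := Finset.sum_nonneg fun i _ => mul_nonneg (hW i) (hC i)
  refine hnonneg.lt_of_ne fun hzero => ?_
  have hm : 0 ≤ normSq y.1 := Finset.sum_nonneg fun k _ => sq_nonneg _
  rw [Z, ← hzero] at hZ
  linarith

lemma quadratic_pos_of_alphaT_lt {W : Fin ns → ℝ} {u0 α : ℝ} {y dy : State d ns}
    (hZ : 0 < Z W u0 y) (hα : alphaT W u0 y dy < α) :
    0 < Z W u0 y * (α * α) + bPert W u0 y dy * α + gPert W u0 dy := by
  by_cases hd : 0 ≤ discrim (Z W u0 y) (bPert W u0 y dy) (gPert W u0 dy)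
  · rw [discrim] at hd
    rw [alphaT, if_pos hd] at hα
    exact quadratic_pos_of_root_lt_s9 hZ hα
  · exact quadratic_pos_of_discrim_neg hZ (not_le.mp hd) α

lemma Z_sub_inv_smul_pos {W : Fin ns → ℝ} {u0 α : ℝ} {y dy : State d ns}
    (hZ : 0 < Z W u0 y) (hα0 : 0 < α) (hα : alphaT W u0 y dy < α) :
    0 < Z W u0 (y - α⁻¹ • dy) := by
  have hscale : Z W u0 (y - α⁻¹ • dy) =
      (Z W u0 y * (α * α) + bPert W u0 y dy * α + gPert W u0 dy) / α ^ 2 := by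
    rw [Z_sub_smul]
    field_simp
  rw [hscale]
  exact div_pos (quadratic_pos_of_alphaT_lt hZ hα) (by positivity)

lemma conc_sub_inv_smul_pos {y dy : State d ns} {α : ℝ} (hC : ∀ i, 0 < y.2.2 i)
    (hα0 : 0 < α) (hα : ⨆ i, dy.2.2 i / y.2.2 i < α) (i : Fin ns) :
    0 < (y - α⁻¹ • dy).2.2 i := by
  have hratio : dy.2.2 i / y.2.2 i < α :=
    (le_ciSup (Finite.bddAbove_range _) i).trans_lt hα
  rw [div_lt_iff₀ (hC i)] at hratio
  rw [conc_sub_smul, sub_pos, inv_mul_lt_iff₀ hα0]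
  exact hratio

/-- (Lemma `alpha-constraints`) if all concentrations of `y` are positive,
`Z(y) > 0`, and `α > α*(y,Δy)`, then `y − α⁻¹·Δy ∈ 𝒢`, with strictly positive
concentration components. -/
theorem alpha_constraints (W : Fin ns → ℝ) (u0 : ℝ) (hW : ∀ i, 0 < W i)
    (y dy : State d ns) (hC : ∀ i, 0 < y.2.2 i) (hZ : 0 < Z W u0 y)
    (α : ℝ) (hα : alphaStar W u0 y dy < α) :
    (y - α⁻¹ • dy) ∈ Gset W u0 ∧ ∀ i, 0 < (y - α⁻¹ • dy).2.2 i := by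
  obtain ⟨hsup, hαT, hα0⟩ : (⨆ i, dy.2.2 i / y.2.2 i) < α ∧ alphaT W u0 y dy < α ∧ 0 < α := by
    simpa only [alphaStar, max_lt_iff] using hα
  have hC' := conc_sub_inv_smul_pos hC hα0 hsup
  have hZ' := Z_sub_inv_smul_pos hZ hα0 hαT
  exact ⟨⟨fun i => (hC' i).le, rho_pos_of_Z_pos (fun i => (hW i).le) (fun i => (hC' i).le) hZ',
    hZ'⟩, hC'⟩

end
end PaperStmt
end
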